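/- Let M = UΣVᵀ be an SVD of M ∈ ℝ^{m×n} with singular values σ. Then the proximal operator of λ times the nuclear norm is prox_{λ‖·‖_*}(M) = U diag(prox_{λ‖·‖₁}(σ)) Vᵀ, where prox_{λ‖·‖₁}(σ)_i = max(σ_i − λ, 0) (singular value soft-thresholding). -/

import Mathlib

open Matrix BigOperators

/-- Frobenius inner product. -/
def frobInner {m n : ℕ} (A B : Matrix (Fin m) (Fin n) ℝ) : ℝ :=
  ∑ i, ∑ j, A i j * B i j

/-- Squared Frobenius norm. -/
def frobSq {m n : ℕ} (A : Matrix (Fin m) (Fin n) ℝ) : ℝ :=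
  ∑ i, ∑ j, (A i j)^2

/-- The nuclear norm of `A`, via its dual (variational) characterization:
`‖A‖_* = sup { ⟨Q, A⟩_F : ‖Q‖_op ≤ 1 }`, where `‖Q‖_op ≤ 1 ⟺ I − QᵀQ ⪰ 0`. -/
noncomputable def nuclearNorm {m n : ℕ} (A : Matrix (Fin m) (Fin n) ℝ) : ℝ :=
  sSup {t : ℝ | ∃ Q : Matrix (Fin m) (Fin n) ℝ,
    (1 - Qᵀ * Q).PosSemidef ∧ t = frobInner Q A}

/-! Let `P = U S' Vᵀ` with `S'` the soft-thresholded `S`. The residual `M - P = U min(S, λ) Vᵀ` is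
`λ` times a contraction, and the nuclear norm is the support function of the contractions, so
`⟨M - P, Z⟩ ≤ λ‖Z‖_*` for every `Z`, with equality at `Z = P`: `M - P` is a subgradient of
`λ‖·‖_*` at `P`. Expanding `½‖M - Z‖²_F` around `P` then gives
`½‖M - Z‖²_F + λ‖Z‖_* ≥ ½‖M - P‖²_F + λ‖P‖_* + ½‖Z - P‖²_F`, hence minimality and uniqueness. -/

section Frobenius

variable {m n : ℕ}

lemma frobSq_nonneg (A : Matrix (Fin m) (Fin n) ℝ) : 0 ≤ frobSq A := by
  unfold frobSq; positivity

lemma frobSq_eq_zero_iff {A : Matrix (Fin m) (Fin n) ℝ} : frobSq A = 0 ↔ A = 0 := by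
  simp [frobSq, Finset.sum_eq_zero_iff_of_nonneg, Finset.sum_nonneg, sq_nonneg, ← Matrix.ext_iff]

lemma frobSq_sub (A B : Matrix (Fin m) (Fin n) ℝ) :
    frobSq (A - B) = frobSq A - 2 * frobInner A B + frobSq B := by
  simp only [frobSq, frobInner, Matrix.sub_apply, sub_sq, Finset.sum_add_distrib,
    Finset.sum_sub_distrib, Finset.mul_sum]
  ring_nf

lemma frobInner_sub_right (A B C : Matrix (Fin m) (Fin n) ℝ) :
    frobInner A (B - C) = frobInner A B - frobInner A C := by
  simp only [frobInner, Matrix.sub_apply, mul_sub, Finset.sum_sub_distrib]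

lemma frobInner_smul_left (c : ℝ) (A B : Matrix (Fin m) (Fin n) ℝ) :
    frobInner (c • A) B = c * frobInner A B := by
  simp only [frobInner, Matrix.smul_apply, smul_eq_mul, Finset.mul_sum, mul_assoc]

lemma frobInner_eq_trace (A B : Matrix (Fin m) (Fin n) ℝ) : frobInner A B = trace (Aᵀ * B) := by
  simp only [frobInner, trace, diag_apply, mul_apply, transpose_apply]
  exact Finset.sum_comm

lemma frobInner_mul_mul_transpose_right (U : Matrix (Fin m) (Fin m) ℝ)
    (V : Matrix (Fin n) (Fin n) ℝ) (Q B : Matrix (Fin m) (Fin n) ℝ) :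
    frobInner Q (U * B * Vᵀ) = frobInner (Uᵀ * Q * V) B := by
  simp only [frobInner_eq_trace, transpose_mul, transpose_transpose, Matrix.mul_assoc]
  rw [trace_mul_comm Vᵀ]
  simp only [Matrix.mul_assoc]

lemma frobInner_mul_mul_transpose {U : Matrix (Fin m) (Fin m) ℝ} {V : Matrix (Fin n) (Fin n) ℝ}
    (hU : Uᵀ * U = 1) (hV : Vᵀ * V = 1) (A B : Matrix (Fin m) (Fin n) ℝ) :
    frobInner (U * A * Vᵀ) (U * B * Vᵀ) = frobInner A B := by
  rw [frobInner_mul_mul_transpose_right, ← Matrix.mul_assoc, ← Matrix.mul_assoc, hU,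
    Matrix.one_mul, Matrix.mul_assoc, hV, Matrix.mul_one]

end Frobenius

section Contraction

variable {m n : ℕ}

def IsContraction (Q : Matrix (Fin m) (Fin n) ℝ) : Prop := (1 - Qᵀ * Q).PosSemidef

lemma isContraction_zero : IsContraction (0 : Matrix (Fin m) (Fin n) ℝ) := by
  simpa [IsContraction] using (PosSemidef.one : (1 : Matrix (Fin n) (Fin n) ℝ).PosSemidef)

lemma IsContraction.abs_apply_le_one {Q : Matrix (Fin m) (Fin n) ℝ} (hQ : IsContraction Q)
    (i : Fin m) (j : Fin n) : |Q i j| ≤ 1 := by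
  have hcol : ∑ k, Q k j ^ 2 ≤ 1 := by
    simpa [Matrix.sub_apply, mul_apply, sq] using hQ.diag_nonneg (i := j)
  have hentry : Q i j ^ 2 ≤ ∑ k, Q k j ^ 2 :=
    Finset.single_le_sum (f := fun k => Q k j ^ 2) (fun _ _ => sq_nonneg _) (Finset.mem_univ i)
  exact sq_le_one_iff_abs_le_one _ |>.mp (hentry.trans hcol)

lemma IsContraction.mul_mul_transpose {E : Matrix (Fin m) (Fin n) ℝ} (hE : IsContraction E)
    {U : Matrix (Fin m) (Fin m) ℝ} {V : Matrix (Fin n) (Fin n) ℝ}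
    (hU : Uᵀ * U = 1) (hV : Vᵀ * V = 1) : IsContraction (U * E * Vᵀ) := by
  have hVVt : V * Vᵀ = 1 := mul_eq_one_comm.mp hV
  have hgram : 1 - (U * E * Vᵀ)ᵀ * (U * E * Vᵀ) = V * (1 - Eᵀ * E) * Vᵀ := by
    calc 1 - (U * E * Vᵀ)ᵀ * (U * E * Vᵀ) = 1 - V * (Eᵀ * (Uᵀ * U) * E) * Vᵀ := by
          simp only [transpose_mul, transpose_transpose, Matrix.mul_assoc]
      _ = V * (1 - Eᵀ * E) * Vᵀ := by
          rw [hU, Matrix.mul_one, Matrix.mul_sub, Matrix.sub_mul, Matrix.mul_one, hVVt]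
  rw [IsContraction, hgram, ← conjTranspose_eq_transpose_of_trivial V]
  exact hE.mul_mul_conjTranspose_same V

lemma isContraction_of_rectDiag {E : Matrix (Fin m) (Fin n) ℝ}
    (hdiag : ∀ (i : Fin m) (j : Fin n), (i : ℕ) ≠ j → E i j = 0) (hle : ∀ i j, |E i j| ≤ 1) :
    IsContraction E := by
  have hgram : Eᵀ * E = diagonal fun j => ∑ i, E i j ^ 2 := by
    ext j k
    rcases eq_or_ne j k with rfl | hjk
    · simp [mul_apply, sq]
    · rw [diagonal_apply_ne _ hjk, mul_apply]
      refine Finset.sum_eq_zero fun i _ => ?_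
      by_cases hij : (i : ℕ) = j
      · simp [hdiag i k (hij ▸ Fin.val_ne_of_ne hjk)]
      · simp [hdiag i j hij]
  have hcol (j : Fin n) : ∑ i, E i j ^ 2 ≤ 1 :=
    calc ∑ i, E i j ^ 2 = ∑ i ∈ Finset.univ.filter (fun i : Fin m => (i : ℕ) = j), E i j ^ 2 :=
          (Finset.sum_filter_of_ne fun i _ hi =>
            by_contra fun hij => hi (by rw [hdiag i j hij]; ring)).symm
      _ ≤ ∑ _i ∈ Finset.univ.filter (fun i : Fin m => (i : ℕ) = j), (1 : ℝ) :=
          Finset.sum_le_sum fun i _ => sq_le_one_iff_abs_le_one _ |>.mpr (hle i j)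
      _ ≤ 1 := by
          rw [Finset.sum_const, nsmul_one, Nat.cast_le_one, Finset.card_le_one]
          intro a ha b hb
          exact Fin.ext ((Finset.mem_filter.mp ha).2.trans (Finset.mem_filter.mp hb).2.symm)
  rw [IsContraction, hgram, ← diagonal_one, diagonal_sub]
  exact posSemidef_diagonal_iff.mpr fun j => sub_nonneg.mpr (hcol j)

lemma exists_isContraction_smul_eq_of_rectDiag {c : ℝ} (hc : 0 ≤ c)
    {D : Matrix (Fin m) (Fin n) ℝ}
    (hdiag : ∀ (i : Fin m) (j : Fin n), (i : ℕ) ≠ j → D i j = 0) (hle : ∀ i j, |D i j| ≤ c) :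
    ∃ E, IsContraction E ∧ D = c • E := by
  rcases hc.eq_or_lt with rfl | hc
  · exact ⟨0, isContraction_zero, by ext i j; simpa using hle i j⟩
  refine ⟨c⁻¹ • D, isContraction_of_rectDiag (fun i j hij => by simp [hdiag i j hij]) fun i j => ?_,
    by rw [smul_smul, mul_inv_cancel₀ hc.ne', one_smul]⟩
  rw [Matrix.smul_apply, smul_eq_mul, abs_mul, abs_inv, abs_of_pos hc, inv_mul_le_one₀ hc]
  exact hle i j

end Contraction

section NuclearNorm

variable {m n : ℕ}

lemma IsContraction.frobInner_le_sum_abs {Q : Matrix (Fin m) (Fin n) ℝ} (hQ : IsContraction Q)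
    (A : Matrix (Fin m) (Fin n) ℝ) : frobInner Q A ≤ ∑ i, ∑ j, |A i j| :=
  Finset.sum_le_sum fun i _ => Finset.sum_le_sum fun j _ =>
    calc Q i j * A i j ≤ |Q i j| * |A i j| := (le_abs_self _).trans (abs_mul _ _).le
      _ ≤ |A i j| := mul_le_of_le_one_left (abs_nonneg _) (hQ.abs_apply_le_one i j)

lemma IsContraction.frobInner_le_nuclearNorm {Q : Matrix (Fin m) (Fin n) ℝ}
    (hQ : IsContraction Q) (A : Matrix (Fin m) (Fin n) ℝ) : frobInner Q A ≤ nuclearNorm A :=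
  le_csSup ⟨_, by rintro t ⟨P, hP, rfl⟩; exact IsContraction.frobInner_le_sum_abs hP A⟩ ⟨Q, hQ, rfl⟩

lemma nuclearNorm_le {A : Matrix (Fin m) (Fin n) ℝ} {c : ℝ}
    (h : ∀ Q, IsContraction Q → frobInner Q A ≤ c) : nuclearNorm A ≤ c :=
  csSup_le ⟨_, 0, isContraction_zero, rfl⟩ fun _ ⟨Q, hQ, ht⟩ => ht ▸ h Q hQ

lemma nuclearNorm_le_sum_abs (A : Matrix (Fin m) (Fin n) ℝ) :
    nuclearNorm A ≤ ∑ i, ∑ j, |A i j| :=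
  nuclearNorm_le fun _ hQ => hQ.frobInner_le_sum_abs A

lemma nuclearNorm_mul_mul_transpose_le {U : Matrix (Fin m) (Fin m) ℝ}
    {V : Matrix (Fin n) (Fin n) ℝ} (hU : Uᵀ * U = 1) (hV : Vᵀ * V = 1)
    (A : Matrix (Fin m) (Fin n) ℝ) : nuclearNorm (U * A * Vᵀ) ≤ nuclearNorm A := by
  refine nuclearNorm_le fun Q hQ => ?_
  rw [frobInner_mul_mul_transpose_right]
  exact (hQ.mul_mul_transpose (mul_eq_one_comm.mp hU)
    (mul_eq_one_comm.mp hV)).frobInner_le_nuclearNorm A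

end NuclearNorm

section Prox

variable {m n : ℕ}

lemma prox_unique_minimizer_of_subgradient {h : Matrix (Fin m) (Fin n) ℝ → ℝ}
    {M P : Matrix (Fin m) (Fin n) ℝ} (hsub : ∀ Z, h P + frobInner (M - P) (Z - P) ≤ h Z) :
    (∀ Z, 1 / 2 * frobSq (M - P) + h P ≤ 1 / 2 * frobSq (M - Z) + h Z) ∧
    (∀ Z, (∀ Z', 1 / 2 * frobSq (M - Z) + h Z ≤ 1 / 2 * frobSq (M - Z') + h Z') → Z = P) := by
  have hstrong (Z) :
      1 / 2 * frobSq (M - P) + h P + 1 / 2 * frobSq (Z - P) ≤ 1 / 2 * frobSq (M - Z) + h Z := by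
    rw [show M - Z = (M - P) - (Z - P) by abel, frobSq_sub (M - P)]
    linarith [hsub Z]
  refine ⟨fun Z => by linarith [hstrong Z, frobSq_nonneg (Z - P)], fun Z hZ => ?_⟩
  have hZP : frobSq (Z - P) ≤ 0 := by linarith [hstrong Z, hZ P]
  exact sub_eq_zero.mp (frobSq_eq_zero_iff.mp (hZP.antisymm (frobSq_nonneg _)))

end Prox

section SoftThreshold

variable {m n : ℕ}

def softThreshold (lam : ℝ) (S : Matrix (Fin m) (Fin n) ℝ) : Matrix (Fin m) (Fin n) ℝ :=
  of fun i j => max (S i j - lam) 0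

lemma sub_softThreshold (lam : ℝ) (S : Matrix (Fin m) (Fin n) ℝ) :
    S - softThreshold lam S = of fun i j => min (S i j) lam := by
  ext i j
  rcases le_total (S i j) lam with h | h <;> simp [softThreshold, h]

variable {lam : ℝ} {S : Matrix (Fin m) (Fin n) ℝ} {U : Matrix (Fin m) (Fin m) ℝ}
  {V : Matrix (Fin n) (Fin n) ℝ}

lemma frobInner_sub_softThreshold_le (hlam : 0 ≤ lam) (hU : Uᵀ * U = 1) (hV : Vᵀ * V = 1)
    (hSnn : ∀ i j, 0 ≤ S i j) (hSdiag : ∀ (i : Fin m) (j : Fin n), (i : ℕ) ≠ j → S i j = 0)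
    (Z : Matrix (Fin m) (Fin n) ℝ) :
    frobInner (U * S * Vᵀ - U * softThreshold lam S * Vᵀ) Z ≤ lam * nuclearNorm Z := by
  rw [← Matrix.sub_mul, ← Matrix.mul_sub, sub_softThreshold]
  obtain ⟨E, hE, hSE⟩ := exists_isContraction_smul_eq_of_rectDiag hlam
    (D := of fun i j => min (S i j) lam) (fun i j hij => by simp [hSdiag i j hij, hlam])
    (fun i j => by simp [abs_of_nonneg (le_min (hSnn i j) hlam)])
  rw [hSE, Matrix.mul_smul, Matrix.smul_mul, frobInner_smul_left]
  exact mul_le_mul_of_nonneg_left ((hE.mul_mul_transpose hU hV).frobInner_le_nuclearNorm Z) hlam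

lemma mul_nuclearNorm_softThreshold_le (hlam : 0 ≤ lam) (hU : Uᵀ * U = 1) (hV : Vᵀ * V = 1) :
    lam * nuclearNorm (U * softThreshold lam S * Vᵀ) ≤
      frobInner (U * S * Vᵀ - U * softThreshold lam S * Vᵀ) (U * softThreshold lam S * Vᵀ) :=
  calc lam * nuclearNorm (U * softThreshold lam S * Vᵀ)
      ≤ lam * ∑ i, ∑ j, |softThreshold lam S i j| := by
        gcongr
        exact (nuclearNorm_mul_mul_transpose_le hU hV _).trans (nuclearNorm_le_sum_abs _)
    _ = frobInner (S - softThreshold lam S) (softThreshold lam S) := by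
        simp only [frobInner, sub_softThreshold, Finset.mul_sum]
        refine Finset.sum_congr rfl fun i _ => Finset.sum_congr rfl fun j _ => ?_
        rcases le_total (S i j) lam with h | h <;> simp [softThreshold, h]
    _ = _ := by rw [← Matrix.sub_mul, ← Matrix.mul_sub, frobInner_mul_mul_transpose hU hV]

end SoftThreshold

/-- if `M = U S Vᵀ` is an SVD of `M ∈ ℝ^{m×n}` (with `U, V`
orthogonal and `S` nonnegative and supported on the diagonal), then
`prox_{λ‖·‖_*}(M) = U S' Vᵀ`, where `S'` soft-thresholds the singular values:
`S' i j = max (S i j − λ) 0`; i.e. `U S' Vᵀ` is the unique minimizer of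
`Z ↦ ½‖M − Z‖_F² + λ‖Z‖_*`. -/
theorem prox_nuclear_norm_svd_soft_thresholding {m n : ℕ}
    (lam : ℝ) (hlam : 0 ≤ lam)
    (M : Matrix (Fin m) (Fin n) ℝ)
    (U : Matrix (Fin m) (Fin m) ℝ) (V : Matrix (Fin n) (Fin n) ℝ)
    (hU : Uᵀ * U = 1) (hV : Vᵀ * V = 1)
    (S : Matrix (Fin m) (Fin n) ℝ)
    (hSnn : ∀ i j, 0 ≤ S i j)
    (hSdiag : ∀ (i : Fin m) (j : Fin n), (i : ℕ) ≠ (j : ℕ) → S i j = 0)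
    (hSVD : M = U * S * Vᵀ) :
    (∀ Z, (1/2) * frobSq (M - U * (Matrix.of fun i j => max (S i j - lam) 0) * Vᵀ)
            + lam * nuclearNorm (U * (Matrix.of fun i j => max (S i j - lam) 0) * Vᵀ)
          ≤ (1/2) * frobSq (M - Z) + lam * nuclearNorm Z) ∧
    (∀ Z, (∀ Z', (1/2) * frobSq (M - Z) + lam * nuclearNorm Z
            ≤ (1/2) * frobSq (M - Z') + lam * nuclearNorm Z') →
      Z = U * (Matrix.of fun i j => max (S i j - lam) 0) * Vᵀ) := by
  subst hSVD
  refine prox_unique_minimizer_of_subgradient (h := (lam * nuclearNorm ·))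
    (P := U * softThreshold lam S * Vᵀ) fun Z => ?_
  rw [frobInner_sub_right]
  linarith [frobInner_sub_softThreshold_le hlam hU hV hSnn hSdiag Z,
    mul_nuclearNorm_softThreshold_le (S := S) hlam hU hV]
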